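/- arXiv:1110.0023 — 6 statements merged into one kernel-verified Lean document; each statement's English description precedes it below -/
import Mathlib

section
/- Let P be a Horn constraint program (all constraints monotone, no negation) and t a P-computation. Then the result R_t of the computation is a supported model of P, i.e., R_t is a model of P and R_t ⊆ hset(P(R_t)). -/
universe u

/-- A constraint `A = (X, C)`: domain `X` and a family `C` of subsets of `X`. -/
structure Constraint (α : Type u) where
  dom : Set α
  sat : Set (Set α)
  sat_sub : ∀ Y ∈ sat, Y ⊆ dom

/-- `M ⊨ A` iff `M ∩ Dom(A) ∈ C`. -/
def Constraint.Sat {α : Type u} (M : Set α) (A : Constraint α) : Prop :=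
  M ∩ A.dom ∈ A.sat

/-- A constraint is monotone if its satisfying family is closed under supersets
within the domain. -/
def Constraint.Mono {α : Type u} (A : Constraint α) : Prop :=
  ∀ W Y : Set α, W ∈ A.sat → W ⊆ Y → Y ⊆ A.dom → Y ∈ A.sat

/-- A rule `A ← A₁,…,A_k, not(A_{k+1}),…,not(A_m)`. -/
structure Rule (α : Type u) where
  head : Constraint α
  pos : Set (Constraint α)
  neg : Set (Constraint α)

/-- A constraint program is a set of rules. -/
abbrev Program (α : Type u) := Set (Rule α)

def Rule.Horn {α : Type u} (r : Rule α) : Prop := r.neg = ∅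

def Rule.Mono {α : Type u} (r : Rule α) : Prop :=
  r.head.Mono ∧ (∀ A ∈ r.pos, A.Mono) ∧ (∀ A ∈ r.neg, A.Mono)

def Program.Horn {α : Type u} (P : Program α) : Prop := ∀ r ∈ P, r.Horn

def Program.Mono {α : Type u} (P : Program α) : Prop := ∀ r ∈ P, r.Mono

/-- `M` satisfies the body of `r`. -/
def Rule.BodySat {α : Type u} (M : Set α) (r : Rule α) : Prop :=
  (∀ A ∈ r.pos, Constraint.Sat M A) ∧ (∀ A ∈ r.neg, ¬ Constraint.Sat M A)

/-- `P(M)`: the set of `M`-applicable rules of `P`. -/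
def Program.app {α : Type u} (P : Program α) (M : Set α) : Program α :=
  {r ∈ P | r.BodySat M}

/-- `hset(r) = Dom(hd(r))`. -/
def Rule.hset {α : Type u} (r : Rule α) : Set α := r.head.dom

/-- `hset(P)`: union of the headsets of rules of `P`. -/
def Program.hset {α : Type u} (P : Program α) : Set α := ⋃ r ∈ P, r.hset

def Rule.atoms {α : Type u} (r : Rule α) : Set α :=
  r.head.dom ∪ (⋃ A ∈ r.pos, A.dom) ∪ (⋃ A ∈ r.neg, A.dom)

/-- `At(P)`: atoms occurring in domains of constraints of `P`. -/
def Program.atoms {α : Type u} (P : Program α) : Set α := ⋃ r ∈ P, r.atoms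

/-- `M` is a model of `P`. -/
def Program.IsModel {α : Type u} (P : Program α) (M : Set α) : Prop :=
  ∀ r ∈ P, r.BodySat M → Constraint.Sat M r.head

/-- `M` is a supported model of `P`. -/
def Program.Supported {α : Type u} (P : Program α) (M : Set α) : Prop :=
  P.IsModel M ∧ M ⊆ (P.app M).hset

/-- The nondeterministic one-step provability operator `T_P^nd`. -/
def Program.Tnd {α : Type u} (P : Program α) (M : Set α) : Set (Set α) :=
  {M' | M' ⊆ (P.app M).hset ∧ ∀ r ∈ P.app M, Constraint.Sat M' r.head}

/-- A `P`-computation: a transfinite sequence starting at `∅`, increasing, with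
each successor step nondeterministically one-step provable, continuous at limits. -/
structure PComputation {α : Type u} (P : Program α) where
  X : Ordinal.{u} → Set α
  zero : X 0 = ∅
  incr : ∀ o, X o ⊆ X (o + 1)
  step : ∀ o, X (o + 1) ∈ P.Tnd (X o)
  limit : ∀ o : Ordinal.{u}, Order.IsSuccLimit o → X o = ⋃ β < o, X β

/-- The result `R_t` of a computation. -/
def PComputation.result {α : Type u} {P : Program α} (t : PComputation P) : Set α :=
  ⋃ o, t.X o

/-- `M` is a derivable model of `P`: the result of some `P`-computation. -/
def Program.Derivable {α : Type u} (P : Program α) (M : Set α) : Prop :=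
  ∃ t : PComputation P, t.result = M

/-- The canonical sequence `t^{P,M}`: `X₀ = ∅`, `X_{β+1} = hset(P(X_β)) ∩ M`,
unions at limits. -/
noncomputable def canSeq {α : Type u} (P : Program α) (M : Set α) (o : Ordinal.{u}) :
    Set α :=
  Ordinal.limitRecOn o ∅ (fun _ ih => (P.app ih).hset ∩ M)
    (fun o _ ih => ⋃ β : Ordinal.{u}, ⋃ h : β < o, ih β h)

/-- `Can(P,M)`: the result of the canonical computation. -/
noncomputable def Can {α : Type u} (P : Program α) (M : Set α) : Set α :=
  ⋃ o, canSeq P M o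

/-- The reduct of a single rule: drop negated literals. -/
def Rule.pos_part {α : Type u} (r : Rule α) : Rule α := ⟨r.head, r.pos, ∅⟩

/-- The reduct `P^M`. -/
def Program.reduct {α : Type u} (P : Program α) (M : Set α) : Program α :=
  {r' | ∃ r ∈ P, (∀ A ∈ r.neg, ¬ Constraint.Sat M A) ∧ r' = r.pos_part}

/-- `M` is a stable model of `P`: a derivable model of the reduct `P^M`. -/
def Program.Stable {α : Type u} (P : Program α) (M : Set α) : Prop :=
  (P.reduct M).Derivable M

/-- `N ⊨_M P`: `N` is an `M`-maximal model of the Horn program `P`. -/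
def Program.MMax {α : Type u} (P : Program α) (M N : Set α) : Prop :=
  N ⊆ M ∧ P.IsModel N ∧ M ∩ (P.app N).hset ⊆ N

/-- `(X,Y)` is an SE-model of `P`. -/
def Program.SE {α : Type u} (P : Program α) (X Y : Set α) : Prop :=
  X ⊆ Y ∧ P.IsModel Y ∧ (P.reduct Y).MMax Y X

/-- `(X,Y)` is a UE-model of `P`. -/
def Program.UE {α : Type u} (P : Program α) (X Y : Set α) : Prop :=
  P.SE X Y ∧ ∀ X', P.SE X' Y → X ⊆ X' → X = X' ∨ X' = Y

/-- Strong equivalence of monotone-constraint programs. -/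
def StrongEq {α : Type u} (P Q : Program α) : Prop :=
  ∀ R : Program α, R.Mono → ∀ M : Set α, (P ∪ R).Stable M ↔ (Q ∪ R).Stable M

/-- The rule `(D,{D}) ←`. -/
def factRule {α : Type u} (D : Set α) : Rule α :=
  ⟨⟨D, {D}, fun Y hY => by simp only [Set.mem_singleton_iff] at hY; simp [hY]⟩, ∅, ∅⟩

/-- Uniform equivalence of monotone-constraint programs. -/
def UnifEq {α : Type u} (P Q : Program α) : Prop :=
  ∀ D : Set α, ∀ M : Set α,
    (P ∪ {factRule D}).Stable M ↔ (Q ∪ {factRule D}).Stable M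

/-- `P` is tight on `M`. -/
def Program.Tight {α : Type u} (P : Program α) (M : Set α) : Prop :=
  ∃ lam : α → Ordinal.{u}, ∀ r ∈ P.app M, ∀ x ∈ M ∩ r.hset,
    ∀ a ∈ M ∩ (⋃ A ∈ r.pos, A.dom), lam a < lam x

/-! The stages of a computation increase, and since there are only set-many atoms they
stabilise at some stage `σ`: every atom of the result `R` already occurs in `X σ`.
Then `X (σ + 1) = X σ = R`, so the step condition `X (σ + 1) ∈ T_P^nd (X σ)` reads
`R ∈ T_P^nd R`, which says exactly that `R` is a model of `P` supported by `P(R)`. -/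

namespace PComputation

variable {α : Type u} {P : Program α} (t : PComputation P)

theorem monotone : Monotone t.X := by
  suffices h : ∀ γ, ∀ β ≤ γ, t.X β ⊆ t.X γ from fun β γ hβγ => h γ β hβγ
  intro γ
  induction γ using Ordinal.limitRecOn with
  | zero => intro β hβ; rw [nonpos_iff_eq_zero.mp hβ]
  | add_one γ ih =>
    intro β hβ
    rcases hβ.eq_or_lt with rfl | hlt
    · exact subset_rfl
    · rw [Order.lt_add_one_iff] at hlt
      exact (ih β hlt).trans (t.incr γ)
  | limit γ hγ _ =>
    intro β hβ
    rcases hβ.eq_or_lt with rfl | hlt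
    · exact subset_rfl
    · rw [t.limit γ hγ]
      exact Set.subset_biUnion_of_mem hlt

theorem X_subset_result (o : Ordinal.{u}) : t.X o ⊆ t.result :=
  Set.subset_iUnion t.X o

theorem exists_X_eq_result : ∃ σ, t.X σ = t.result := by
  choose stage h_stage using fun a : t.result => Set.mem_iUnion.mp a.2
  refine ⟨⨆ a, stage a, (t.X_subset_result _).antisymm fun a ha => ?_⟩
  exact t.monotone (le_ciSup Ordinal.bddAbove_of_small ⟨a, ha⟩) (h_stage ⟨a, ha⟩)

theorem result_mem_Tnd : t.result ∈ P.Tnd t.result := by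
  obtain ⟨σ, hσ⟩ := t.exists_X_eq_result
  have h_succ : t.X (σ + 1) = t.result :=
    (t.X_subset_result _).antisymm (hσ ▸ t.incr σ)
  simpa only [hσ, h_succ] using t.step σ

end PComputation

theorem Program.supported_of_mem_Tnd {α : Type u} {P : Program α} {M : Set α}
    (hM : M ∈ P.Tnd M) : P.Supported M :=
  ⟨fun r hr hbody => hM.2 r ⟨hr, hbody⟩, hM.1⟩

theorem result_supported_general {α : Type u} (P : Program α)
    (t : PComputation P) : P.Supported t.result :=
  Program.supported_of_mem_Tnd t.result_mem_Tnd

/-- The result of any computation of a Horn (monotone, negation-free)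
constraint program is a supported model of the program. -/
theorem result_supported {α : Type u} (P : Program α) (hHorn : P.Horn) (hMono : P.Mono)
    (t : PComputation P) : P.Supported t.result :=
  result_supported_general P t
end

section
/- Let P be a Horn constraint program and M a model of P. Then the canonical sequence t^{P,M}, defined by X₀=∅, X_{β+1} = hset(P(X_β)) ∩ M, and unions at limit ordinals, is a P-computation. -/
universe u

/-!
For a Horn program with monotone constraints the applicable rules `P(X)`, hence also
`hset(P(X))`, grow with `X`. By transfinite induction this makes the canonical sequence
increasing and, since every successor is cut down to `M`, contained in `M`. Each step is then
one-step provable: a rule applicable at `X_β ⊆ M` is applicable at `M`, so its head is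
satisfied by the model `M`, and whether `M` satisfies the head depends only on `M ∩ hset`,
which is exactly where `X_{β+1}` and `M` agree.
-/

variable {α : Type u}

theorem Constraint.sat_inter_iff_of_dom_subset {A : Constraint α} {S : Set α}
    (hS : A.dom ⊆ S) (M : Set α) : Constraint.Sat (S ∩ M) A ↔ Constraint.Sat M A := by
  have : S ∩ M ∩ A.dom = M ∩ A.dom := by
    rw [Set.inter_right_comm, Set.inter_eq_right.mpr hS, Set.inter_comm]
  rw [Constraint.Sat, Constraint.Sat, this]

namespace Program

variable {P : Program α}

theorem hset_mono {Q : Program α} (h : P ⊆ Q) : P.hset ⊆ Q.hset :=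
  Set.biUnion_subset_biUnion_left h

theorem head_dom_subset_hset {r : Rule α} (hr : r ∈ P) : r.head.dom ⊆ P.hset :=
  Set.subset_biUnion_of_mem (u := Rule.hset) hr

theorem app_mono (hHorn : P.Horn) (hMono : P.Mono) {N N' : Set α} (h : N ⊆ N') :
    P.app N ⊆ P.app N' := by
  rintro r ⟨hrP, hpos, -⟩
  refine ⟨hrP, fun A hA => ?_, fun A hA => ?_⟩
  · exact (hMono r hrP).2.1 A hA _ _ (hpos A hA)
      (Set.inter_subset_inter_left _ h) Set.inter_subset_right
  · have hneg : r.neg = ∅ := hHorn r hrP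
    simp [hneg] at hA

theorem hset_app_mono (hHorn : P.Horn) (hMono : P.Mono) {N N' : Set α} (h : N ⊆ N') :
    (P.app N).hset ⊆ (P.app N').hset :=
  hset_mono (app_mono hHorn hMono h)

theorem hset_app_inter_mem_Tnd (hHorn : P.Horn) (hMono : P.Mono) {M X : Set α}
    (hMod : P.IsModel M) (hX : X ⊆ M) : (P.app X).hset ∩ M ∈ P.Tnd X := by
  refine ⟨Set.inter_subset_left, fun r hr => ?_⟩
  obtain ⟨hrP, hbody⟩ := app_mono hHorn hMono hX hr
  exact (Constraint.sat_inter_iff_of_dom_subset (head_dom_subset_hset hr) M).mpr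
    (hMod r hrP hbody)

end Program

section canSeq

variable (P : Program α) (M : Set α)

@[simp]
theorem canSeq_zero : canSeq P M 0 = ∅ := by
  simp [canSeq]

@[simp]
theorem canSeq_succ (o : Ordinal.{u}) :
    canSeq P M (o + 1) = (P.app (canSeq P M o)).hset ∩ M := by
  simp [canSeq]

theorem canSeq_limit {o : Ordinal.{u}} (ho : Order.IsSuccLimit o) :
    canSeq P M o = ⋃ β < o, canSeq P M β := by
  rw [canSeq, Ordinal.limitRecOn_limit _ _ _ _ ho]
  rfl

variable {P}

theorem canSeq_subset_succ (hHorn : P.Horn) (hMono : P.Mono) (o : Ordinal.{u}) :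
    canSeq P M o ⊆ canSeq P M (o + 1) := by
  induction o using Ordinal.limitRecOn with
  | zero => simp
  | add_one β ih =>
    calc canSeq P M (β + 1) = (P.app (canSeq P M β)).hset ∩ M := canSeq_succ P M β
      _ ⊆ (P.app (canSeq P M (β + 1))).hset ∩ M :=
        Set.inter_subset_inter_left M (P.hset_app_mono hHorn hMono ih)
      _ = canSeq P M (β + 1 + 1) := (canSeq_succ P M (β + 1)).symm
  | limit o ho ih =>
    rw [canSeq_succ]
    intro x hx
    obtain ⟨β, hβ, hxβ⟩ := Set.mem_iUnion₂.mp ((canSeq_limit P M ho).le hx)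
    have hβo : canSeq P M β ⊆ canSeq P M o :=
      (canSeq_limit P M ho).ge.trans' (Set.subset_biUnion_of_mem hβ)
    have hxβ' := ih β hβ hxβ
    rw [canSeq_succ] at hxβ'
    exact Set.inter_subset_inter_left M (P.hset_app_mono hHorn hMono hβo) hxβ'

theorem canSeq_subset (hHorn : P.Horn) (hMono : P.Mono) (o : Ordinal.{u}) :
    canSeq P M o ⊆ M :=
  (canSeq_subset_succ M hHorn hMono o).trans (by simp)

end canSeq

/-- For a Horn constraint program `P` and a model `M` of `P`, the
canonical sequence `t^{P,M}` is a `P`-computation. -/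
theorem canonical_is_computation {α : Type u} (P : Program α) (hHorn : P.Horn)
    (hMono : P.Mono) (M : Set α) (hMod : P.IsModel M) :
    ∃ t : PComputation P, t.X = canSeq P M := by
  refine ⟨⟨canSeq P M, canSeq_zero P M, canSeq_subset_succ M hHorn hMono, fun o => ?_,
    fun o ho => canSeq_limit P M ho⟩, rfl⟩
  rw [canSeq_succ]
  exact P.hset_app_inter_mem_Tnd hHorn hMono hMod (canSeq_subset M hHorn hMono o)
end

section
/- Let P be a monotone-constraint program. If M ⊆ At(P) is a stable model of P, then M is a supported model of P. -/
universe u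

/-! A derivable model `R` of a program is a fixpoint of its one-step provability operator,
`R ∈ T^nd(R)`: its computation must stabilise (a `Type u`-indexed sequence of sets cannot
grow strictly along all of `Ordinal.{u}`), and one more step from the stable stage is
supported by, and satisfies the heads of, the rules applicable at `R`. For the reduct `P^M`
the operator at `M` coincides with that of `P` at `M`, and `M ∈ T_P^nd(M)` says exactly
that `M` is a supported model of `P`. -/

theorem Ordinal.exists_eq_iUnion_of_monotone {β : Type u} {X : Ordinal.{u} → Set β}
    (hX : Monotone X) : ∃ o, X o = ⋃ o, X o := by
  classical
  let stage : β → Ordinal.{u} := fun x => if h : ∃ o, x ∈ X o then h.choose else 0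
  obtain ⟨o₀, ho₀⟩ := Ordinal.bddAbove_of_small (s := Set.range stage)
  refine ⟨o₀, (Set.subset_iUnion X o₀).antisymm fun x hx => ?_⟩
  have hx' : ∃ o, x ∈ X o := Set.mem_iUnion.mp hx
  have hstage : x ∈ X (stage x) := by simpa only [stage, dif_pos hx'] using hx'.choose_spec
  exact hX (ho₀ ⟨x, rfl⟩) hstage

theorem Program.Derivable.mem_Tnd {α : Type u} {P : Program α} {M : Set α}
    (h : P.Derivable M) : M ∈ P.Tnd M := by
  obtain ⟨t, rfl⟩ := h
  exact t.result_mem_Tnd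

namespace Program

variable {α : Type u} (P : Program α) (M : Set α)

theorem app_reduct_self : (P.reduct M).app M = Rule.pos_part '' P.app M := by
  ext r'
  constructor
  · rintro ⟨⟨r, hr, hneg, rfl⟩, hpos, -⟩
    exact ⟨r, ⟨hr, hpos, hneg⟩, rfl⟩
  · rintro ⟨r, ⟨hr, hpos, hneg⟩, rfl⟩
    exact ⟨⟨r, hr, hneg, rfl⟩, hpos, fun _ h => absurd h (Set.notMem_empty _)⟩

theorem Tnd_reduct_self : (P.reduct M).Tnd M = P.Tnd M := by
  ext M'
  simp only [Tnd, app_reduct_self, hset, Set.biUnion_image, Set.forall_mem_image]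
  rfl

theorem supported_iff_mem_Tnd : P.Supported M ↔ M ∈ P.Tnd M :=
  ⟨fun ⟨hmodel, hsupp⟩ => ⟨hsupp, fun r hr => hmodel r hr.1 hr.2⟩,
    fun ⟨hsupp, hheads⟩ => ⟨fun r hr hbody => hheads r ⟨hr, hbody⟩, hsupp⟩⟩

end Program

theorem stable_supported_general {α : Type u} (P : Program α)
    (M : Set α) (hSt : P.Stable M) : P.Supported M := by
  rw [Program.supported_iff_mem_Tnd, ← Program.Tnd_reduct_self]
  exact hSt.mem_Tnd

/-- Every stable model of a monotone-constraint program is supported. -/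
theorem stable_supported {α : Type u} (P : Program α) (hMono : P.Mono)
    (M : Set α) (hsub : M ⊆ P.atoms) (hSt : P.Stable M) : P.Supported M :=
  stable_supported_general P M hSt
end

section
/- Let P be a monotone-constraint program and M a model of P. Then (M,M) and (Can(P^M,M),M) are SE-models of P. -/
universe u

/-!
The reduct `P^M` is a Horn program with monotone body constraints, so the canonical
computation of `Can(P^M, M)` is the ordinal iteration, from `∅`, of the monotone operator
`S ↦ hset(P^M(S)) ∩ M`, and its union is the least fixed point `X` of that operator.
Being a fixed point, `X ⊆ M` and `X` absorbs `M ∩ hset(P^M(X))`. Every `N ⊆ M` with this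
absorption property (`M` itself, trivially) is a model of `P^M`: if `N` satisfies the body
of a reduct rule, so does `M` by monotonicity, hence `M` satisfies its head, and `N` agrees
with `M` on the head's domain.
-/

open OrdinalApprox

section

variable {α : Type u}

theorem Constraint.Sat.mono {A : Constraint α} (hA : A.Mono) {X Y : Set α}
    (h : Constraint.Sat X A) (hXY : X ⊆ Y) : Constraint.Sat Y A :=
  hA _ _ h (Set.inter_subset_inter_left _ hXY) Set.inter_subset_right

namespace Program

theorem reduct_horn (P : Program α) (M : Set α) : (P.reduct M).Horn := by
  rintro _ ⟨r, -, -, rfl⟩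
  rfl

theorem Mono.reduct {P : Program α} (hP : P.Mono) (M : Set α) : (P.reduct M).Mono := by
  rintro _ ⟨r, hr, -, rfl⟩
  exact ⟨(hP r hr).1, (hP r hr).2.1, fun A hA => absurd hA (Set.notMem_empty A)⟩

theorem app_mono_s9 {Q : Program α} (hH : Q.Horn) (hM : Q.Mono) : Monotone Q.app := by
  rintro X Y hXY r ⟨hr, hpos, -⟩
  exact ⟨hr, fun A hA => (hpos A hA).mono ((hM r hr).2.1 A hA) hXY,
    fun A hA => absurd (hH r hr ▸ hA) (Set.notMem_empty A)⟩

theorem hset_mono_s9 : Monotone (Program.hset (α := α)) :=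
  fun _ _ h => Set.biUnion_subset_biUnion_left h

def canOp (Q : Program α) (hH : Q.Horn) (hM : Q.Mono) (M : Set α) : Set α →o Set α where
  toFun S := (Q.app S).hset ∩ M
  monotone' _ _ h := Set.inter_subset_inter_left M (hset_mono_s9 (app_mono_s9 hH hM h))

end Program

open Program

theorem canSeq_eq_lfpApprox {Q : Program α} (hH : Q.Horn) (hM : Q.Mono) (M : Set α)
    (o : Ordinal.{u}) : canSeq Q M o = lfpApprox (canOp Q hH hM M) ⊥ o := by
  induction o using Ordinal.limitRecOn with
  | zero => rw [canSeq, Ordinal.limitRecOn_zero, lfpApprox_zero]; rfl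
  | add_one o ih =>
    rw [canSeq, Ordinal.limitRecOn_add_one, lfpApprox_add_one _ bot_le, ← ih]
    rfl
  | limit o ho ih =>
    rw [canSeq, Ordinal.limitRecOn_limit _ _ _ _ ho, lfpApprox_of_isSuccLimit _ ho]
    simp only [Set.iSup_eq_iUnion, Set.iUnion_subtype, Set.mem_Iio]
    exact Set.iUnion₂_congr ih

theorem Can_eq_lfp {Q : Program α} (hH : Q.Horn) (hM : Q.Mono) (M : Set α) :
    Can Q M = (canOp Q hH hM M).lfp := by
  have hfix := lfpApprox_ord_mem_fixedPoint (canOp Q hH hM M) (x := ⊥) bot_le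
  rw [Can, ← lfpApprox_ord_eq_lfp, ← iSup_lfpApprox_eq_of_mem_fixedPoints _ hfix]
  exact Set.iUnion_congr (canSeq_eq_lfpApprox hH hM M)

theorem hset_app_Can_inter {Q : Program α} (hH : Q.Horn) (hM : Q.Mono) (M : Set α) :
    (Q.app (Can Q M)).hset ∩ M = Can Q M := by
  rw [Can_eq_lfp hH hM M]
  exact (canOp Q hH hM M).map_lfp

theorem Program.isModel_reduct {P : Program α} (hP : P.Mono) {M N : Set α} (hM : P.IsModel M)
    (hNM : N ⊆ M) (hN : M ∩ ((P.reduct M).app N).hset ⊆ N) : (P.reduct M).IsModel N := by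
  rintro _ ⟨r, hr, hneg, rfl⟩ hbody
  have hhead : Constraint.Sat M r.head :=
    hM r hr ⟨fun A hA => (hbody.1 A hA).mono ((hP r hr).2.1 A hA) hNM, hneg⟩
  have hdom : N ∩ r.head.dom = M ∩ r.head.dom := by
    refine (Set.inter_subset_inter_left _ hNM).antisymm fun x hx => ⟨hN ⟨hx.1, ?_⟩, hx.2⟩
    exact Set.mem_biUnion (x := r.pos_part) ⟨⟨r, hr, hneg, rfl⟩, hbody⟩ hx.2
  change N ∩ r.head.dom ∈ r.head.sat
  rwa [hdom]

theorem Program.se_of_reduct_absorbing {P : Program α} (hP : P.Mono) {M N : Set α}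
    (hM : P.IsModel M) (hNM : N ⊆ M) (hN : M ∩ ((P.reduct M).app N).hset ⊆ N) :
    P.SE N M :=
  ⟨hNM, hM, hNM, P.isModel_reduct hP hM hNM hN, hN⟩

end

/-- `(M,M)` and `(Can(P^M,M),M)` are SE-models of `P`, for any model
`M` of a monotone-constraint program `P`. -/
theorem se_models_of_model {α : Type u} (P : Program α) (hMono : P.Mono)
    (M : Set α) (hMod : P.IsModel M) :
    P.SE M M ∧ P.SE (Can (P.reduct M) M) M := by
  have hfix := hset_app_Can_inter (P.reduct_horn M) (hMono.reduct M) M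
  refine ⟨P.se_of_reduct_absorbing hMono hMod subset_rfl Set.inter_subset_left,
    P.se_of_reduct_absorbing hMono hMod ?_ ?_⟩
  · exact hfix ▸ Set.inter_subset_right
  · exact Set.inter_comm M _ ▸ hfix.subset
end

section
/- Let P be a Horn monotone-constraint program and M a supported model of P. If P is tight on M, then M = Can(P,M), hence M is a stable model of P. -/
universe u

/-!
Since `P` is Horn and monotone, applicability of rules is monotone in the interpretation, so
the canonical sequence is increasing, stays inside `M` and, `M` being a model, is a
`P`-computation whose result `Can(P,M)` is derivable. Conversely, an atom `x ∈ M` is supported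
by a rule applicable in `M` whose body atoms in `M` all have smaller level `λ`; so by induction
on `β`, every `x ∈ M` with `λ x < β` enters the canonical sequence by stage `β`. Hence
`M = Can(P,M)`, and as the reduct of a Horn program is the program itself, `M` is stable.
-/

section

variable {α : Type u}

def Program.TightWith (P : Program α) (M : Set α) (lam : α → Ordinal.{u}) : Prop :=
  ∀ r ∈ P.app M, ∀ x ∈ M ∩ r.hset, ∀ a ∈ M ∩ (⋃ A ∈ r.pos, A.dom), lam a < lam x

theorem Constraint.Sat.of_inter_subset {A : Constraint α} (hA : A.Mono) {M N : Set α}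
    (hM : Constraint.Sat M A) (hMN : M ∩ A.dom ⊆ N) : Constraint.Sat N A :=
  hA _ _ hM (Set.subset_inter hMN Set.inter_subset_right) Set.inter_subset_right

theorem Rule.bodySat_iff_of_horn {r : Rule α} (hr : r.Horn) {N : Set α} :
    r.BodySat N ↔ ∀ A ∈ r.pos, Constraint.Sat N A := by
  simp [Rule.BodySat, show r.neg = ∅ from hr]

theorem Program.app_mono_s17 {P : Program α} (hHorn : P.Horn) (hMono : P.Mono) :
    Monotone P.app := by
  rintro N N' hNN' r ⟨hrP, hbody⟩
  refine ⟨hrP, (Rule.bodySat_iff_of_horn (hHorn r hrP)).2 fun A hA => ?_⟩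
  exact ((Rule.bodySat_iff_of_horn (hHorn r hrP)).1 hbody A hA).of_inter_subset
    ((hMono r hrP).2.1 A hA) (Set.inter_subset_left.trans hNN')

theorem Program.hset_mono_s17 : Monotone (Program.hset (α := α)) :=
  fun _ _ h => Set.biUnion_subset_biUnion_left h

theorem Program.reduct_eq_self_of_horn {P : Program α} (hHorn : P.Horn) (M : Set α) :
    P.reduct M = P := by
  have pos_part_eq : ∀ r ∈ P, r.pos_part = r := fun r hr => by
    show (⟨r.head, r.pos, ∅⟩ : Rule α) = r
    rw [← show r.neg = ∅ from hHorn r hr]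
  ext r
  constructor
  · rintro ⟨r, hr, -, rfl⟩
    rwa [pos_part_eq r hr]
  · intro hr
    exact ⟨r, hr, by simp [show r.neg = ∅ from hHorn r hr], (pos_part_eq r hr).symm⟩

namespace canSeq

variable (P : Program α) (M : Set α)

theorem zero : canSeq P M 0 = ∅ :=
  Ordinal.limitRecOn_zero _ _ _

theorem add_one (o : Ordinal.{u}) : canSeq P M (o + 1) = (P.app (canSeq P M o)).hset ∩ M :=
  Ordinal.limitRecOn_add_one _ _ _ _

theorem limit {o : Ordinal.{u}} (ho : Order.IsSuccLimit o) :
    canSeq P M o = ⋃ β < o, canSeq P M β :=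
  Ordinal.limitRecOn_limit _ _ _ _ ho

theorem subset (o : Ordinal.{u}) : canSeq P M o ⊆ M := by
  induction o using Ordinal.limitRecOn with
  | zero => simp [zero]
  | add_one o _ => simp [add_one]
  | limit o ho ih => simpa [limit P M ho] using ih

variable {P}

theorem subset_add_one (hHorn : P.Horn) (hMono : P.Mono) (o : Ordinal.{u}) :
    canSeq P M o ⊆ canSeq P M (o + 1) := by
  induction o using Ordinal.limitRecOn with
  | zero => simp [zero]
  | add_one o ih =>
    rw [add_one, add_one]
    exact Set.inter_subset_inter_left _ (Program.hset_mono_s17 (Program.app_mono_s17 hHorn hMono ih))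
  | limit o ho ih =>
    rw [limit P M ho, add_one, Set.iUnion₂_subset_iff]
    intro β hβ
    refine (ih β hβ).trans ?_
    rw [add_one]
    refine Set.inter_subset_inter_left _ (Program.hset_mono_s17 (Program.app_mono_s17 hHorn hMono ?_))
    rw [limit P M ho]
    exact Set.subset_iUnion₂_of_subset β hβ le_rfl

end canSeq

theorem Can_subset (P : Program α) (M : Set α) : Can P M ⊆ M :=
  Set.iUnion_subset (canSeq.subset P M)

section Tight

variable {P : Program α} {M : Set α} {lam : α → Ordinal.{u}}

theorem Program.TightWith.mem_hset_app (hHorn : P.Horn) (hMono : P.Mono)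
    (hSupp : P.Supported M) (hlam : P.TightWith M lam) {x : α} (hx : x ∈ M) {N : Set α}
    (hN : ∀ a ∈ M, lam a < lam x → a ∈ N) : x ∈ (P.app N).hset := by
  obtain ⟨r, hr, hxr⟩ := Set.mem_iUnion₂.1 (hSupp.2 hx)
  refine Set.mem_biUnion ⟨hr.1, (Rule.bodySat_iff_of_horn (hHorn r hr.1)).2 fun A hA => ?_⟩ hxr
  refine ((Rule.bodySat_iff_of_horn (hHorn r hr.1)).1 hr.2 A hA).of_inter_subset
    ((hMono r hr.1).2.1 A hA) ?_
  rintro a ⟨haM, haA⟩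
  exact hN a haM (hlam r hr x ⟨hx, hxr⟩ a ⟨haM, Set.mem_biUnion hA haA⟩)

theorem Program.TightWith.mem_canSeq (hHorn : P.Horn) (hMono : P.Mono)
    (hSupp : P.Supported M) (hlam : P.TightWith M lam) (β : Ordinal.{u}) :
    ∀ x ∈ M, lam x < β → x ∈ canSeq P M β := by
  induction β using Ordinal.limitRecOn with
  | zero => simp
  | add_one β ih =>
    intro x hx hxβ
    rw [canSeq.add_one]
    refine ⟨hlam.mem_hset_app hHorn hMono hSupp hx fun a ha hax => ih a ha ?_, hx⟩
    exact hax.trans_le (Order.lt_add_one_iff.1 hxβ)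
  | limit β hβ ih =>
    intro x hx hxβ
    have hsucc : lam x + 1 < β := hβ.add_one_lt hxβ
    rw [canSeq.limit P M hβ]
    exact Set.mem_biUnion hsucc (ih _ hsucc x hx (Order.lt_add_one_iff.2 le_rfl))

theorem Program.TightWith.subset_Can (hHorn : P.Horn) (hMono : P.Mono)
    (hSupp : P.Supported M) (hlam : P.TightWith M lam) : M ⊆ Can P M := fun x hx =>
  Set.mem_iUnion.2
    ⟨lam x + 1, hlam.mem_canSeq hHorn hMono hSupp _ x hx (Order.lt_add_one_iff.2 le_rfl)⟩

end Tight

def Program.canComputation {P : Program α} (hHorn : P.Horn) (hMono : P.Mono) {M : Set α}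
    (hM : P.IsModel M) : PComputation P where
  X := canSeq P M
  zero := canSeq.zero P M
  incr := canSeq.subset_add_one M hHorn hMono
  step o := by
    rw [canSeq.add_one]
    refine ⟨Set.inter_subset_left, fun r hr => ?_⟩
    have hrM : r ∈ P.app M := Program.app_mono_s17 hHorn hMono (canSeq.subset P M o) hr
    have hdom : ((P.app (canSeq P M o)).hset ∩ M) ∩ r.head.dom = M ∩ r.head.dom :=
      Set.Subset.antisymm (Set.inter_subset_inter_left _ Set.inter_subset_right)
        fun a ⟨haM, haD⟩ => ⟨⟨Set.mem_biUnion hr haD, haM⟩, haD⟩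
    rw [Constraint.Sat, hdom]
    exact hM r hrM.1 hrM.2
  limit o := canSeq.limit P M

theorem Program.derivable_Can {P : Program α} (hHorn : P.Horn) (hMono : P.Mono) {M : Set α}
    (hM : P.IsModel M) : P.Derivable (Can P M) :=
  ⟨P.canComputation hHorn hMono hM, rfl⟩

end

/-- Fages Lemma, Horn case: a supported model of a tight Horn
monotone-constraint program equals `Can(P,M)`, hence is stable. -/
theorem fages_horn {α : Type u} (P : Program α) (hHorn : P.Horn) (hMono : P.Mono)
    (M : Set α) (hSupp : P.Supported M) (hTight : P.Tight M) :
    M = Can P M ∧ P.Stable M := by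
  obtain ⟨lam, hlam⟩ := hTight
  have hCan : M = Can P M :=
    (Program.TightWith.subset_Can (lam := lam) hHorn hMono hSupp hlam).antisymm
      (Can_subset P M)
  refine ⟨hCan, ?_⟩
  rw [Program.Stable, Program.reduct_eq_self_of_horn hHorn, hCan]
  exact Program.derivable_Can hHorn hMono hSupp.1
end

section
/- Let P be a monotone-constraint program. A set M ⊆ At(P) is a supported model of P if and only if M is a model of the completion Comp(P). -/
universe u

/-- Formulas of the logic `PL^mc`: Boolean combinations (with infinitary
conjunction and disjunction) of monotone constraints. -/
inductive PLmc (α : Type u) : Type (u + 1)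
  | con : Constraint α → PLmc α
  | not : PLmc α → PLmc α
  | imp : PLmc α → PLmc α → PLmc α
  | iAnd : (ι : Type u) → (ι → PLmc α) → PLmc α
  | iOr : (ι : Type u) → (ι → PLmc α) → PLmc α

/-- Satisfaction of `PL^mc` formulas. -/
def PLmc.Sat {α : Type u} (M : Set α) : PLmc α → Prop
  | .con A => Constraint.Sat M A
  | .not f => ¬ PLmc.Sat M f
  | .imp f g => PLmc.Sat M f → PLmc.Sat M g
  | .iAnd _ f => ∀ i, PLmc.Sat M (f i)
  | .iOr _ f => ∃ i, PLmc.Sat M (f i)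

/-- `[bd(r)]^∧`: the conjunction of body literals of `r`. -/
def Rule.bodyF {α : Type u} (r : Rule α) : PLmc α :=
  .iAnd (↥r.pos ⊕ ↥r.neg)
    (fun i => Sum.rec (fun A => .con A.1) (fun A => .not (.con A.1)) i)

/-- The constraint `C(x) = ({x},{{x}})` representing the atom `x`. -/
def atomC {α : Type u} (x : α) : Constraint α :=
  ⟨{x}, {{x}}, fun Y hY => by simp only [Set.mem_singleton_iff] at hY; simp [hY]⟩

/-- The completion `Comp(P)` of a monotone-constraint program `P`. -/
def Comp {α : Type u} (P : Program α) : Set (PLmc α) :=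
  {f | ∃ r ∈ P, f = .imp r.bodyF (.con r.head)} ∪
  {f | ∃ x ∈ P.atoms, f = .imp (.con (atomC x))
        (.iOr {r : Rule α // r ∈ P ∧ x ∈ r.hset} (fun r => r.1.bodyF))}

@[simp]
theorem PLmc.sat_bodyF_iff {α : Type u} (M : Set α) (r : Rule α) :
    PLmc.Sat M r.bodyF ↔ r.BodySat M :=
  ⟨fun h => ⟨fun A hA => h (.inl ⟨A, hA⟩), fun A hA => h (.inr ⟨A, hA⟩)⟩,
    fun ⟨hpos, hneg⟩ => Sum.rec (fun A => hpos A.1 A.2) (fun A => hneg A.1 A.2)⟩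

@[simp]
theorem Constraint.sat_atomC_iff {α : Type u} (M : Set α) (x : α) :
    Constraint.Sat M (atomC x) ↔ x ∈ M := by
  simp [Constraint.Sat, atomC, Set.inter_eq_right]

theorem Program.mem_hset_app_iff {α : Type u} (P : Program α) (M : Set α) (x : α) :
    x ∈ (P.app M).hset ↔ ∃ r : {r : Rule α // r ∈ P ∧ x ∈ r.hset}, r.1.BodySat M := by
  simp only [Program.hset, Program.app, Set.mem_iUnion, Set.mem_ofPred_eq, Subtype.exists,
    exists_prop]
  exact exists_congr fun r => by tauto

def Rule.compFormula {α : Type u} (r : Rule α) : PLmc α :=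
  .imp r.bodyF (.con r.head)

def Program.supportFormula {α : Type u} (P : Program α) (x : α) : PLmc α :=
  .imp (.con (atomC x)) (.iOr {r : Rule α // r ∈ P ∧ x ∈ r.hset} (fun r => r.1.bodyF))

theorem Rule.sat_compFormula_iff {α : Type u} (M : Set α) (r : Rule α) :
    PLmc.Sat M r.compFormula ↔ (r.BodySat M → Constraint.Sat M r.head) := by
  simp [compFormula, PLmc.Sat]

theorem Program.sat_supportFormula_iff {α : Type u} (P : Program α) (M : Set α) (x : α) :
    PLmc.Sat M (P.supportFormula x) ↔ (x ∈ M → x ∈ (P.app M).hset) := by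
  simp [supportFormula, PLmc.Sat, P.mem_hset_app_iff]

theorem Program.sat_comp_iff {α : Type u} (P : Program α) (M : Set α) :
    (∀ f ∈ Comp P, PLmc.Sat M f) ↔
      (∀ r ∈ P, PLmc.Sat M r.compFormula) ∧ ∀ x ∈ P.atoms, PLmc.Sat M (P.supportFormula x) := by
  refine ⟨fun h => ⟨fun r hr => h _ (.inl ⟨r, hr, rfl⟩), fun x hx => h _ (.inr ⟨x, hx, rfl⟩)⟩, ?_⟩
  rintro ⟨hrule, hatom⟩ f (⟨r, hr, rfl⟩ | ⟨x, hx, rfl⟩)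
  exacts [hrule r hr, hatom x hx]

theorem supported_iff_completion_general {α : Type u} (P : Program α)
    (M : Set α) (hsub : M ⊆ P.atoms) :
    P.Supported M ↔ ∀ f ∈ Comp P, PLmc.Sat M f := by
  simp only [P.sat_comp_iff, Rule.sat_compFormula_iff, P.sat_supportFormula_iff]
  exact and_congr Iff.rfl ⟨fun hsupp x _ hx => hsupp hx, fun hsupp x hx => hsupp x (hsub hx) hx⟩

/-- `M ⊆ At(P)` is a supported model of `P` iff `M` is a model of
the completion `Comp(P)`. -/
theorem supported_iff_completion {α : Type u} (P : Program α) (hMono : P.Mono)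
    (M : Set α) (hsub : M ⊆ P.atoms) :
    P.Supported M ↔ ∀ f ∈ Comp P, PLmc.Sat M f :=
  supported_iff_completion_general P M hsub
end
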